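/- Let (Ω, ℱ, ℙ) be a probability space, 𝒲 a finite type, and W : Ω → 𝒲 measurable with ℙ(W = w) > 0 for every w ∈ 𝒲. Let Y : ℝ × Ω → ℝ be jointly measurable such that for every ω the map x ↦ Y(x, ω) is differentiable with derivative D(x, ω), where D is jointly measurable and |D(x, ω)| ≤ C for all x, ω. Let A, B : Ω → ℝ be integrable random variables such that for every w ∈ 𝒲 and every x ∈ ℝ, under the conditional probability measure ℙ(· | {W = w}) the random variables ω ↦ 𝟙_{[A(ω),∞)}(x) − 𝟙_{[B(ω),∞)}(x) and ω ↦ D(x, ω) are independent. Then 𝔼[Y(B(·), ·) − Y(A(·), ·)] = ∑_{w ∈ 𝒲} ℙ(W = w) · ∫_ℝ (F_A^w(x) − F_B^w(x))·𝔼^w[D(x, ·)] dx, where F_A^w(x) = ℙ(A ≤ x | W = w) and 𝔼^w denotes expectation under ℙ(· | {W = w}). -/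

import Mathlib

/-!
For each `ω` the fundamental theorem of calculus writes `Y (B ω) ω - Y (A ω) ω` as
`∫ x, (𝟙[A ω ≤ x] - 𝟙[B ω ≤ x]) * D x ω`, whose integrand is supported on the interval between
`A ω` and `B ω` and bounded by `C`; integrability of `A` and `B` therefore makes it integrable on
`Ω × ℝ`, and Fubini lets us integrate over `ω` first. Under a conditional law `μ[|W ⁻¹' {w}]` the
independence hypothesis factors that inner integral as `(F_A^w(x) - F_B^w(x)) * 𝔼^w[D x]`, and the
law of total expectation over the finitely many fibres of `W` assembles the pieces.
-/

open MeasureTheory Set ProbabilityTheory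

lemma indicator_Ici_sub_indicator_Ici_mul (a b : ℝ) (ψ : ℝ → ℝ) :
    (fun x => ((Ici a).indicator (fun _ => (1 : ℝ)) x
      - (Ici b).indicator (fun _ => (1 : ℝ)) x) * ψ x)
      = (Ico a b).indicator ψ - (Ico b a).indicator ψ := by
  ext x
  by_cases ha : a ≤ x <;> by_cases hb : b ≤ x <;> simp [indicator_apply, ha, hb]

lemma abs_indicator_Ici_sub_indicator_Ici (a b x : ℝ) :
    |(Ici a).indicator (fun _ => (1 : ℝ)) x - (Ici b).indicator (fun _ => (1 : ℝ)) x|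
      = (Ico (min a b) (max a b)).indicator (fun _ => (1 : ℝ)) x := by
  by_cases ha : a ≤ x <;> by_cases hb : b ≤ x <;> simp [indicator_apply, ha, hb]

lemma IntervalIntegrable.integrableOn_Ico {ψ : ℝ → ℝ} {a b : ℝ}
    (hψ : IntervalIntegrable ψ volume a b) : IntegrableOn ψ (Ico a b) :=
  ((intervalIntegrable_iff' (f := ψ)).1 hψ).mono_set (Ico_subset_Icc_self.trans Icc_subset_uIcc)

lemma integrable_indicator_Ici_sub_mul {ψ : ℝ → ℝ} {a b : ℝ}
    (hψ : IntervalIntegrable ψ volume a b) :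
    Integrable (fun x => ((Ici a).indicator (fun _ => (1 : ℝ)) x
      - (Ici b).indicator (fun _ => (1 : ℝ)) x) * ψ x) := by
  rw [indicator_Ici_sub_indicator_Ici_mul]
  exact (hψ.integrableOn_Ico.integrable_indicator measurableSet_Ico).sub
    (hψ.symm.integrableOn_Ico.integrable_indicator measurableSet_Ico)

lemma integral_indicator_Ici_sub_mul_eq_sub {φ ψ : ℝ → ℝ} {a b : ℝ}
    (hφ : ∀ x, HasDerivAt φ (ψ x) x) (hψ : IntervalIntegrable ψ volume a b) :
    ∫ x, ((Ici a).indicator (fun _ => (1 : ℝ)) x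
      - (Ici b).indicator (fun _ => (1 : ℝ)) x) * ψ x = φ b - φ a := by
  rw [← intervalIntegral.integral_eq_sub_of_hasDerivAt (fun x _ => hφ x) hψ, intervalIntegral,
    indicator_Ici_sub_indicator_Ici_mul,
    integral_sub' (hψ.integrableOn_Ico.integrable_indicator measurableSet_Ico)
      (hψ.symm.integrableOn_Ico.integrable_indicator measurableSet_Ico),
    integral_indicator measurableSet_Ico, integral_indicator measurableSet_Ico,
    integral_Ico_eq_integral_Ioc, integral_Ico_eq_integral_Ioc]

lemma integral_norm_indicator_Ici_sub_mul_le {ψ : ℝ → ℝ} {C : ℝ} (hC : ∀ x, |ψ x| ≤ C)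
    (a b : ℝ) :
    ∫ x, ‖((Ici a).indicator (fun _ => (1 : ℝ)) x
      - (Ici b).indicator (fun _ => (1 : ℝ)) x) * ψ x‖ ≤ C * |b - a| := by
  have hnorm : (fun x => ‖((Ici a).indicator (fun _ => (1 : ℝ)) x
      - (Ici b).indicator (fun _ => (1 : ℝ)) x) * ψ x‖)
      = (Ico (min a b) (max a b)).indicator fun x => |ψ x| := by
    ext x
    rw [Real.norm_eq_abs, abs_mul, abs_indicator_Ici_sub_indicator_Ici]
    by_cases hx : x ∈ Ico (min a b) (max a b) <;> simp [hx]
  calc ∫ x, ‖((Ici a).indicator (fun _ => (1 : ℝ)) x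
        - (Ici b).indicator (fun _ => (1 : ℝ)) x) * ψ x‖
      = ∫ x in Ico (min a b) (max a b), |ψ x| := by
        rw [hnorm, integral_indicator measurableSet_Ico]
    _ ≤ ‖∫ x in Ico (min a b) (max a b), |ψ x|‖ := le_abs_self _
    _ ≤ C * volume.real (Ico (min a b) (max a b)) :=
        norm_setIntegral_le_of_norm_le_const measure_Ico_lt_top fun x _ => by simpa using hC x
    _ = C * |b - a| := by
        rw [measureReal_def, Real.volume_Ico, ENNReal.toReal_ofReal (sub_nonneg.2 min_le_max),
          max_sub_min_eq_abs]

lemma intervalIntegrable_of_abs_le {ψ : ℝ → ℝ} {C : ℝ} (hψ : AEStronglyMeasurable ψ)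
    (hC : ∀ x, |ψ x| ≤ C) (a b : ℝ) : IntervalIntegrable ψ volume a b :=
  intervalIntegrable_const.mono_fun' hψ.restrict (.of_forall hC)

section RandomEndpoints

variable {Ω : Type*} [MeasurableSpace Ω] {ν : Measure Ω} {A B : Ω → ℝ}

lemma aemeasurable_indicator_Ici_fst {ρ : Measure ℝ} (hA : AEMeasurable A ν) :
    AEMeasurable (fun p : Ω × ℝ => (Ici (A p.1)).indicator (fun _ => (1 : ℝ)) p.2)
      (ν.prod ρ) :=
  aemeasurable_const.indicator₀ (nullMeasurableSet_le hA.comp_fst measurable_snd.aemeasurable)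

lemma integral_indicator_Ici_eq_toReal (hA : AEMeasurable A ν) (x : ℝ) :
    ∫ ω, (Ici (A ω)).indicator (fun _ => (1 : ℝ)) x ∂ν = (ν (A ⁻¹' Iic x)).toReal := by
  change ∫ ω, (A ⁻¹' Iic x).indicator (fun _ => (1 : ℝ)) ω ∂ν = _
  rw [integral_indicator₀ (hA.nullMeasurableSet_preimage measurableSet_Iic), setIntegral_const,
    smul_eq_mul, mul_one, measureReal_def]

lemma integrable_indicator_Ici [IsFiniteMeasure ν] (hA : AEMeasurable A ν) (x : ℝ) :
    Integrable (fun ω => (Ici (A ω)).indicator (fun _ => (1 : ℝ)) x) ν :=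
  (integrable_const (1 : ℝ)).indicator₀ (hA.nullMeasurableSet_preimage measurableSet_Iic)

lemma integral_indicator_Ici_sub_mul_of_indepFun [IsFiniteMeasure ν] {Z : Ω → ℝ}
    (hA : AEMeasurable A ν) (hB : AEMeasurable B ν) (hZ : AEStronglyMeasurable Z ν) (x : ℝ)
    (hindep : IndepFun (fun ω => (Ici (A ω)).indicator (fun _ => (1 : ℝ)) x
      - (Ici (B ω)).indicator (fun _ => (1 : ℝ)) x) Z ν) :
    ∫ ω, ((Ici (A ω)).indicator (fun _ => (1 : ℝ)) x
      - (Ici (B ω)).indicator (fun _ => (1 : ℝ)) x) * Z ω ∂ν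
      = ((ν (A ⁻¹' Iic x)).toReal - (ν (B ⁻¹' Iic x)).toReal) * ∫ ω, Z ω ∂ν := by
  have hA' := integrable_indicator_Ici hA x
  have hB' := integrable_indicator_Ici hB x
  rw [← integral_indicator_Ici_eq_toReal hA, ← integral_indicator_Ici_eq_toReal hB,
    ← integral_sub hA' hB']
  exact hindep.integral_mul_eq_mul_integral (hA'.sub hB').aestronglyMeasurable hZ

variable {Y D : ℝ → Ω → ℝ} {C : ℝ}

lemma integrable_prod_indicator_Ici_sub_mul [SFinite ν] (hA : Integrable A ν)
    (hB : Integrable B ν) (hDmeas : Measurable (fun p : ℝ × Ω => D p.1 p.2))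
    (hbd : ∀ x ω, |D x ω| ≤ C) :
    Integrable (fun p : Ω × ℝ => ((Ici (A p.1)).indicator (fun _ => (1 : ℝ)) p.2
      - (Ici (B p.1)).indicator (fun _ => (1 : ℝ)) p.2) * D p.2 p.1) (ν.prod volume) := by
  have hmeas : AEStronglyMeasurable (fun p : Ω × ℝ =>
      ((Ici (A p.1)).indicator (fun _ => (1 : ℝ)) p.2
        - (Ici (B p.1)).indicator (fun _ => (1 : ℝ)) p.2) * D p.2 p.1) (ν.prod volume) :=
    (((aemeasurable_indicator_Ici_fst hA.aemeasurable).sub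
      (aemeasurable_indicator_Ici_fst hB.aemeasurable)).mul
      (hDmeas.comp measurable_swap).aemeasurable).aestronglyMeasurable
  rw [integrable_prod_iff hmeas]
  refine ⟨.of_forall fun ω => ?_, ?_⟩
  · exact integrable_indicator_Ici_sub_mul (intervalIntegrable_of_abs_le
      hDmeas.of_uncurry_right.aestronglyMeasurable (hbd · ω) (A ω) (B ω))
  refine ((hB.sub hA).abs.const_mul C).mono' hmeas.norm.integral_prod_right'
    (.of_forall fun ω => ?_)
  rw [Real.norm_of_nonneg (integral_nonneg fun _ => norm_nonneg _)]
  exact integral_norm_indicator_Ici_sub_mul_le (hbd · ω) (A ω) (B ω)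

lemma sub_eq_integral_indicator_Ici_sub_mul
    (hderiv : ∀ ω x, HasDerivAt (fun x => Y x ω) (D x ω) x)
    (hDmeas : Measurable (fun p : ℝ × Ω => D p.1 p.2)) (hbd : ∀ x ω, |D x ω| ≤ C) (ω : Ω) :
    Y (B ω) ω - Y (A ω) ω = ∫ x, ((Ici (A ω)).indicator (fun _ => (1 : ℝ)) x
      - (Ici (B ω)).indicator (fun _ => (1 : ℝ)) x) * D x ω :=
  (integral_indicator_Ici_sub_mul_eq_sub (hderiv ω) (intervalIntegrable_of_abs_le
    hDmeas.of_uncurry_right.aestronglyMeasurable (hbd · ω) (A ω) (B ω))).symm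

lemma integrable_sub_of_hasDerivAt [SFinite ν]
    (hderiv : ∀ ω x, HasDerivAt (fun x => Y x ω) (D x ω) x)
    (hDmeas : Measurable (fun p : ℝ × Ω => D p.1 p.2)) (hbd : ∀ x ω, |D x ω| ≤ C)
    (hA : Integrable A ν) (hB : Integrable B ν) :
    Integrable (fun ω => Y (B ω) ω - Y (A ω) ω) ν :=
  (integrable_prod_indicator_Ici_sub_mul hA hB hDmeas hbd).integral_prod_left.congr
    (.of_forall fun ω => (sub_eq_integral_indicator_Ici_sub_mul hderiv hDmeas hbd ω).symm)

theorem integral_sub_eq_integral_cdf_sub_mul [IsFiniteMeasure ν]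
    (hderiv : ∀ ω x, HasDerivAt (fun x => Y x ω) (D x ω) x)
    (hDmeas : Measurable (fun p : ℝ × Ω => D p.1 p.2)) (hbd : ∀ x ω, |D x ω| ≤ C)
    (hA : Integrable A ν) (hB : Integrable B ν)
    (hindep : ∀ x, IndepFun (fun ω => (Ici (A ω)).indicator (fun _ => (1 : ℝ)) x
      - (Ici (B ω)).indicator (fun _ => (1 : ℝ)) x) (fun ω => D x ω) ν) :
    ∫ ω, (Y (B ω) ω - Y (A ω) ω) ∂ν
      = ∫ x, ((ν (A ⁻¹' Iic x)).toReal - (ν (B ⁻¹' Iic x)).toReal) * ∫ ω, D x ω ∂ν := by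
  calc ∫ ω, (Y (B ω) ω - Y (A ω) ω) ∂ν
      = ∫ ω, (∫ x, ((Ici (A ω)).indicator (fun _ => (1 : ℝ)) x
          - (Ici (B ω)).indicator (fun _ => (1 : ℝ)) x) * D x ω) ∂ν :=
        integral_congr_ae (.of_forall (sub_eq_integral_indicator_Ici_sub_mul hderiv hDmeas hbd))
    _ = ∫ x, ∫ ω, ((Ici (A ω)).indicator (fun _ => (1 : ℝ)) x
          - (Ici (B ω)).indicator (fun _ => (1 : ℝ)) x) * D x ω ∂ν :=
        integral_integral_swap (integrable_prod_indicator_Ici_sub_mul hA hB hDmeas hbd)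
    _ = _ := integral_congr_ae (.of_forall fun x =>
        integral_indicator_Ici_sub_mul_of_indepFun hA.aemeasurable hB.aemeasurable
          hDmeas.of_uncurry_left.aestronglyMeasurable x (hindep x))

end RandomEndpoints

lemma MeasureTheory.Integrable.cond {Ω E : Type*} [MeasurableSpace Ω] [NormedAddCommGroup E]
    {μ : Measure Ω} {f : Ω → E} (hf : Integrable f μ) (s : Set Ω) : Integrable f μ[|s] := by
  by_cases hs : μ s = 0
  · simp [cond_eq_zero_of_meas_eq_zero hs]
  · exact hf.restrict.smul_measure (ENNReal.inv_ne_top.2 hs)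

theorem integral_eq_sum_toReal_smul_integral_cond {Ω α E : Type*} [MeasurableSpace Ω]
    [Fintype α] [MeasurableSpace α] [MeasurableSingletonClass α] [NormedAddCommGroup E]
    [NormedSpace ℝ E] {μ : Measure Ω} [IsFiniteMeasure μ] {X : Ω → α} (hX : Measurable X)
    {f : Ω → E} (hf : Integrable f μ) :
    ∫ ω, f ω ∂μ = ∑ x, (μ (X ⁻¹' {x})).toReal • ∫ ω, f ω ∂μ[|X ⁻¹' {x}] := by
  conv_lhs => rw [← sum_meas_smul_cond_fiber hX μ]
  rw [integral_finsetSum_measure fun x _ => (hf.cond _).smul_measure (measure_ne_top _ _)]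
  simp_rw [integral_smul_measure]

theorem stmt4_general {Ω : Type*} [MeasurableSpace Ω] (μ : Measure Ω) [IsProbabilityMeasure μ]
    {𝒲 : Type*} [Fintype 𝒲] [MeasurableSpace 𝒲] [MeasurableSingletonClass 𝒲]
    (W : Ω → 𝒲) (hW : Measurable W)
    (Y D : ℝ → Ω → ℝ)
    (hderiv : ∀ ω x, HasDerivAt (fun x => Y x ω) (D x ω) x)
    (hDmeas : Measurable (fun p : ℝ × Ω => D p.1 p.2))
    (C : ℝ) (hbd : ∀ x ω, |D x ω| ≤ C)
    (A B : Ω → ℝ) (hA : Integrable A μ) (hB : Integrable B μ)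
    (hindep : ∀ w : 𝒲, ∀ x : ℝ, IndepFun
      (fun ω => Set.indicator (Set.Ici (A ω)) (fun _ => (1 : ℝ)) x
        - Set.indicator (Set.Ici (B ω)) (fun _ => (1 : ℝ)) x)
      (fun ω => D x ω) (μ[|W ⁻¹' {w}])) :
    (∫ ω, (Y (B ω) ω - Y (A ω) ω) ∂μ) =
      ∑ w : 𝒲, (μ (W ⁻¹' {w})).toReal *
        ∫ x : ℝ,
          (((μ[|W ⁻¹' {w}]) (A ⁻¹' Set.Iic x)).toReal
            - ((μ[|W ⁻¹' {w}]) (B ⁻¹' Set.Iic x)).toReal) *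
          ∫ ω, D x ω ∂(μ[|W ⁻¹' {w}]) := by
  rw [integral_eq_sum_toReal_smul_integral_cond hW
    (integrable_sub_of_hasDerivAt hderiv hDmeas hbd hA hB)]
  refine Finset.sum_congr rfl fun w _ => ?_
  rw [smul_eq_mul, integral_sub_eq_integral_cdf_sub_mul hderiv hDmeas hbd (hA.cond _) (hB.cond _)
    (hindep w)]

/-- Theorem 3.1 (identification of CAPCE) with a covariate `W` taking finitely many values:
under joint measurability, uniform boundedness of the partial derivative, and conditional
independence of the indicator difference and the derivative given each value `w` of `W`,
`𝔼[Y(B) − Y(A)] = ∑_w ℙ(W = w) · ∫ (F_A^w(x) − F_B^w(x)) · 𝔼^w[D(x,·)] dx`,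
where `F_A^w` is the conditional CDF and `𝔼^w` the conditional expectation given `W = w`. -/
theorem stmt4 {Ω : Type*} [MeasurableSpace Ω] (μ : Measure Ω) [IsProbabilityMeasure μ]
    {𝒲 : Type*} [Fintype 𝒲] [MeasurableSpace 𝒲] [MeasurableSingletonClass 𝒲]
    (W : Ω → 𝒲) (hW : Measurable W) (hpos : ∀ w : 𝒲, 0 < μ (W ⁻¹' {w}))
    (Y D : ℝ → Ω → ℝ)
    (hYmeas : Measurable (fun p : ℝ × Ω => Y p.1 p.2))
    (hderiv : ∀ ω x, HasDerivAt (fun x => Y x ω) (D x ω) x)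
    (hDmeas : Measurable (fun p : ℝ × Ω => D p.1 p.2))
    (C : ℝ) (hbd : ∀ x ω, |D x ω| ≤ C)
    (A B : Ω → ℝ) (hA : Integrable A μ) (hB : Integrable B μ)
    (hindep : ∀ w : 𝒲, ∀ x : ℝ, IndepFun
      (fun ω => Set.indicator (Set.Ici (A ω)) (fun _ => (1 : ℝ)) x
        - Set.indicator (Set.Ici (B ω)) (fun _ => (1 : ℝ)) x)
      (fun ω => D x ω) (μ[|W ⁻¹' {w}])) :
    (∫ ω, (Y (B ω) ω - Y (A ω) ω) ∂μ) =
      ∑ w : 𝒲, (μ (W ⁻¹' {w})).toReal *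
        ∫ x : ℝ,
          (((μ[|W ⁻¹' {w}]) (A ⁻¹' Set.Iic x)).toReal
            - ((μ[|W ⁻¹' {w}]) (B ⁻¹' Set.Iic x)).toReal) *
          ∫ ω, D x ω ∂(μ[|W ⁻¹' {w}]) :=
  stmt4_general μ W hW Y D hderiv hDmeas C hbd A B hA hB hindep
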